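/- arXiv:2604.08466 — 9 statements merged into one kernel-verified Lean document; each statement's English description precedes it below -/
import Mathlib

section
/- Let n, S be positive integers, P > 0 a real number, and set t_μ := μP/S for μ = 0,…,S. For each μ ∈ {0,…,S−1} let O_μ be an n×n complex matrix and h_μ : ℝ → ℝ a continuous function, and set θ_μ := 2·∫_{t_μ}^{t_{μ+1}} h_μ(t) dt. Suppose U : ℝ → Matrix n n ℂ is continuous on [0,P], satisfies U(0) = 1, and on each interval (t_μ, t_{μ+1}) is differentiable with U'(t) = −i·h_μ(t)·(O_μ · U(t)). Then U(P) = exp(−i·(θ_{S−1}/2)·O_{S−1}) · exp(−i·(θ_{S−2}/2)·O_{S−2}) ⋯ exp(−i·(θ_0/2)·O_0). -/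
open scoped Matrix.Norms.L2Operator
open NormedSpace Set

/-! For a generator of the form `c'(t) • A` the values at different times commute, so
`exp (-c t • A) * U t` has derivative zero and the evolution over one interval is
`exp ((c b - c a) • A)`; with `c' = -i h_μ` this is exactly the gate with angle `θ_μ`.
The evolution over `[0, P]` is then the product of the gates, telescoping over the intervals. -/

theorem Fin.apply_last_eq_prod_reverse_ofFn_mul {M : Type*} [Monoid M] {S : ℕ}
    (f : Fin (S + 1) → M) (g : Fin S → M) (hf : ∀ μ, f μ.succ = g μ * f μ.castSucc) :
    f (Fin.last S) = (List.ofFn g).reverse.prod * f 0 := by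
  induction S with
  | zero => simp
  | succ S ih =>
    have hlast := ih (fun μ => f μ.castSucc) (fun μ => g μ.castSucc) (fun μ => hf μ.castSucc)
    rw [Fin.castSucc_zero] at hlast
    rw [List.ofFn_succ', List.concat_eq_append, List.reverse_append, List.prod_append,
      List.reverse_singleton, List.prod_singleton, mul_assoc, ← hlast, ← hf, Fin.succ_last]

section BanachAlgebra

variable {𝔸 : Type*} [NormedRing 𝔸] [NormedAlgebra ℂ 𝔸] [CompleteSpace 𝔸]

theorem HasDerivAt.exp_smul_const {c : ℝ → ℂ} {c' : ℂ} {t : ℝ} (hc : HasDerivAt c c' t)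
    (A : 𝔸) :
    HasDerivAt (fun t => NormedSpace.exp (c t • A)) (c' • (A * NormedSpace.exp (c t • A))) t :=
  (hasDerivAt_exp_smul_const' A (c t)).scomp t hc

theorem exp_smul_mul_exp_smul (x y : ℂ) (A : 𝔸) :
    exp (x • A) * exp (y • A) = exp ((x + y) • A) := by
  let +nondep : NormedAlgebra ℚ 𝔸 := .restrictScalars ℚ ℂ 𝔸
  rw [add_smul, exp_add_of_commute (((Commute.refl A).smul_left x).smul_right y)]

theorem eq_exp_sub_smul_mul_of_hasDerivAt {a b : ℝ} (hab : a ≤ b) (A : 𝔸) {c c' : ℝ → ℂ}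
    (hc : ContinuousOn c (Icc a b)) (hc' : ∀ t ∈ Ioo a b, HasDerivAt c (c' t) t)
    {U : ℝ → 𝔸} (hU : ContinuousOn U (Icc a b))
    (hU' : ∀ t ∈ Ioo a b, HasDerivAt U (c' t • (A * U t)) t) :
    U b = exp ((c b - c a) • A) * U a := by
  let +nondep : NormedAlgebra ℚ 𝔸 := .restrictScalars ℚ ℂ 𝔸
  set W : ℝ → 𝔸 := fun t => exp (-c t • A) * U t
  have hW : ContinuousOn W (Icc a b) :=
    (exp_continuous.comp_continuousOn (hc.neg.smul continuousOn_const)).mul hU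
  have hW' : ∀ t ∈ Ioo a b, HasDerivAt W 0 t := by
    intro t ht
    refine (((hc' t ht).neg.exp_smul_const A).mul (hU' t ht)).congr_deriv ?_
    have hcomm : Commute A (exp (-c t • A)) := ((Commute.refl A).smul_right _).exp_right
    rw [smul_mul_assoc, mul_smul_comm, ← mul_assoc, Pi.neg_apply, hcomm.eq, neg_smul,
      neg_add_cancel]
  have hWab : W b = W a := by
    have := intervalIntegral.integral_eq_sub_of_hasDerivAt_of_le hab hW hW' intervalIntegrable_const
    rwa [intervalIntegral.integral_zero, eq_comm, sub_eq_zero] at this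
  calc U b = exp (c b • A) * W b := by
        rw [← mul_assoc, exp_smul_mul_exp_smul, add_neg_cancel, zero_smul, exp_zero, one_mul]
    _ = exp ((c b - c a) • A) * U a := by
        rw [hWab, ← mul_assoc, exp_smul_mul_exp_smul, ← sub_eq_add_neg]

theorem eq_exp_integral_smul_mul_of_hasDerivAt {a b : ℝ} (hab : a ≤ b) (A : 𝔸) {h : ℝ → ℝ}
    (hh : Continuous h) {U : ℝ → 𝔸} (hU : ContinuousOn U (Icc a b))
    (hU' : ∀ t ∈ Ioo a b, HasDerivAt U ((-Complex.I * (h t : ℂ)) • (A * U t)) t) :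
    U b = exp ((-Complex.I * ((∫ t in a..b, h t : ℝ) : ℂ)) • A) * U a := by
  set c : ℝ → ℂ := fun t => -Complex.I * ((∫ s in a..t, h s : ℝ) : ℂ)
  have hc' : ∀ t, HasDerivAt c (-Complex.I * (h t : ℂ)) t := fun t =>
    ((hh.integral_hasStrictDerivAt a t).hasDerivAt.ofReal_comp).const_mul _
  simpa [c] using eq_exp_sub_smul_mul_of_hasDerivAt hab A
    (fun t _ => (hc' t).continuousAt.continuousWithinAt) (fun t _ => hc' t) hU hU'

end BanachAlgebra

theorem circuit_eq_piecewise_evolution_general (n S : ℕ) (hS : 0 < S)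
    (P : ℝ) (hP : 0 < P)
    (O : Fin S → Matrix (Fin n) (Fin n) ℂ)
    (h : Fin S → ℝ → ℝ) (hcont : ∀ μ, Continuous (h μ))
    (θ : Fin S → ℝ)
    (hθ : ∀ μ : Fin S, θ μ =
      2 * ∫ t in ((μ : ℝ) * P / S)..(((μ : ℝ) + 1) * P / S), h μ t)
    (U : ℝ → Matrix (Fin n) (Fin n) ℂ)
    (hUcont : ContinuousOn U (Set.Icc 0 P))
    (hU0 : U 0 = 1)
    (hUder : ∀ μ : Fin S, ∀ t ∈ Set.Ioo ((μ : ℝ) * P / S) (((μ : ℝ) + 1) * P / S),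
      HasDerivAt U ((-Complex.I * (h μ t : ℂ)) • (O μ * U t)) t) :
    U P = ((List.ofFn fun μ : Fin S =>
      NormedSpace.exp ((-Complex.I * ((θ μ / 2 : ℝ) : ℂ)) • O μ)).reverse).prod := by
  have hS' : (0 : ℝ) < S := by exact_mod_cast hS
  have hgate : ∀ μ : Fin S, U (((μ : ℝ) + 1) * P / S) =
      exp ((-Complex.I * ((θ μ / 2 : ℝ) : ℂ)) • O μ) * U ((μ : ℝ) * P / S) := by
    intro μ
    have hμS : (μ : ℝ) + 1 ≤ S := by exact_mod_cast μ.isLt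
    have hsub : Icc ((μ : ℝ) * P / S) (((μ : ℝ) + 1) * P / S) ⊆ Icc 0 P :=
      Icc_subset_Icc (by positivity) (div_le_of_le_mul₀ hS'.le hP.le (by nlinarith))
    rw [eq_exp_integral_smul_mul_of_hasDerivAt (by gcongr; linarith) (O μ) (hcont μ)
      (hUcont.mono hsub) (hUder μ), hθ μ, mul_div_cancel_left₀ _ two_ne_zero]
  have hprod := Fin.apply_last_eq_prod_reverse_ofFn_mul (fun k : Fin (S + 1) => U (k * P / S))
    _ fun μ => by simpa using hgate μ
  simpa [hU0, mul_div_cancel_left₀ P hS'.ne'] using hprod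

/-- **Lemma 1 of the paper.** The piecewise Schrödinger evolution generated by
`H(t) = Σ_μ 1_{[t_μ, t_{μ+1}]}(t)·h_μ(t)·O_μ` over total time `P` equals the product of the
circuit gates `exp(-i(θ_μ/2)·O_μ)`, applied in series (gate `0` first). -/
theorem circuit_eq_piecewise_evolution (n S : ℕ) (hn : 0 < n) (hS : 0 < S)
    (P : ℝ) (hP : 0 < P)
    (O : Fin S → Matrix (Fin n) (Fin n) ℂ)
    (h : Fin S → ℝ → ℝ) (hcont : ∀ μ, Continuous (h μ))
    (θ : Fin S → ℝ)
    (hθ : ∀ μ : Fin S, θ μ =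
      2 * ∫ t in ((μ : ℝ) * P / S)..(((μ : ℝ) + 1) * P / S), h μ t)
    (U : ℝ → Matrix (Fin n) (Fin n) ℂ)
    (hUcont : ContinuousOn U (Set.Icc 0 P))
    (hU0 : U 0 = 1)
    (hUder : ∀ μ : Fin S, ∀ t ∈ Set.Ioo ((μ : ℝ) * P / S) (((μ : ℝ) + 1) * P / S),
      HasDerivAt U ((-Complex.I * (h μ t : ℂ)) • (O μ * U t)) t) :
    U P = ((List.ofFn fun μ : Fin S =>
      NormedSpace.exp ((-Complex.I * ((θ μ / 2 : ℝ) : ℂ)) • O μ)).reverse).prod :=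
  circuit_eq_piecewise_evolution_general n S hS P hP O h hcont θ hθ U hUcont hU0 hUder
end

section
/- Let H₁, H₂ : ℝ → Matrix (Fin n) (Fin n) ℂ be continuous with H₁(s) and H₂(s) Hermitian for every s, and let U₁, U₂ : ℝ → Matrix (Fin n) (Fin n) ℂ be differentiable solutions of U_j'(t) = −i·H_j(t)·U_j(t) with U_j(0) = 1, for j = 1,2. Then for every t ≥ 0, ‖U₁(t)†·U₂(t) − 1‖ ≤ ∫₀^t ‖H₁(s) − H₂(s)‖ ds, where ‖·‖ is the operator norm; equivalently, ‖U₁(t) − U₂(t)‖ ≤ ∫₀^t ‖H₁(s) − H₂(s)‖ ds. -/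
open scoped Matrix.Norms.L2Operator
open scoped Matrix

/-!
Differentiating `E(t) = U₁(t)⋆ U₂(t) - 1` with `H₁` self-adjoint gives
`E'(t) = i • U₁(t)⋆ (H₁(t) - H₂(t)) U₂(t)`. Taking `U₁ = U₂` shows that `U⋆U` is constant, so each
`U_j(t)` is an isometry, hence unitary in a Dedekind-finite algebra such as a matrix algebra.
Multiplication by unitaries preserves the C⋆-norm, so `‖E'(s)‖ = ‖H₁(s) - H₂(s)‖`, and integrating
from `E(0) = 0` gives the first bound. The second follows from `U₁⋆U₂ - 1 = U₁⋆(U₂ - U₁)`.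
-/

open Complex

section
variable {A : Type*} [CStarAlgebra A] {H H₁ H₂ U U₁ U₂ : ℝ → A} {t : ℝ}

theorem hasDerivAt_star_mul_of_schrodinger (hH₁ : IsSelfAdjoint (H₁ t))
    (hU₁ : HasDerivAt U₁ (-I • (H₁ t * U₁ t)) t) (hU₂ : HasDerivAt U₂ (-I • (H₂ t * U₂ t)) t) :
    HasDerivAt (fun s ↦ star (U₁ s) * U₂ s) (I • (star (U₁ t) * (H₁ t - H₂ t) * U₂ t)) t := by
  convert hU₁.star.fun_mul hU₂ using 1
  rw [star_smul, star_mul, hH₁.star_eq, star_neg, Complex.star_def, conj_I, neg_neg]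
  simp only [smul_mul_assoc, mul_smul_comm, neg_smul, mul_neg, mul_sub, sub_mul, smul_sub,
    mul_assoc, ← sub_eq_add_neg]

theorem star_mul_self_of_schrodinger (hH : ∀ t, IsSelfAdjoint (H t)) (hU0 : U 0 = 1)
    (hU : ∀ t, HasDerivAt U (-I • (H t * U t)) t) (t : ℝ) : star (U t) * U t = 1 := by
  have hderiv (s : ℝ) : HasDerivAt (fun s ↦ star (U s) * U s) 0 s := by
    simpa using hasDerivAt_star_mul_of_schrodinger (hH s) (hU s) (hU s)
  rw [is_const_of_deriv_eq_zero (fun s ↦ (hderiv s).differentiableAt)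
    (fun s ↦ (hderiv s).deriv) t 0, hU0, star_one, one_mul]

theorem mem_unitary_of_schrodinger [IsDedekindFiniteMonoid A] (hH : ∀ t, IsSelfAdjoint (H t))
    (hU0 : U 0 = 1) (hU : ∀ t, HasDerivAt U (-I • (H t * U t)) t) (t : ℝ) : U t ∈ unitary A :=
  have h := star_mul_self_of_schrodinger hH hU0 hU t
  Unitary.mem_iff.mpr ⟨h, mul_eq_one_comm.mp h⟩

theorem norm_sub_eq_norm_star_mul_sub_one {u : A} (hu : u ∈ unitary A) (v : A) :
    ‖u - v‖ = ‖star u * v - 1‖ := by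
  rw [← Unitary.star_mul_self_of_mem hu, ← mul_sub,
    CStarRing.norm_mem_unitary_mul _ (Unitary.star_mem hu), norm_sub_rev]

theorem norm_star_mul_sub_one_le_integral [IsDedekindFiniteMonoid A]
    (hH₁c : Continuous H₁) (hH₂c : Continuous H₂)
    (hH₁ : ∀ t, IsSelfAdjoint (H₁ t)) (hH₂ : ∀ t, IsSelfAdjoint (H₂ t))
    (hU₁0 : U₁ 0 = 1) (hU₂0 : U₂ 0 = 1)
    (hU₁ : ∀ t, HasDerivAt U₁ (-I • (H₁ t * U₁ t)) t)
    (hU₂ : ∀ t, HasDerivAt U₂ (-I • (H₂ t * U₂ t)) t) (ht : 0 ≤ t) :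
    ‖star (U₁ t) * U₂ t - 1‖ ≤ ∫ s in 0..t, ‖H₁ s - H₂ s‖ := by
  set E : ℝ → A := fun s ↦ star (U₁ s) * U₂ s - 1
  have hE (s : ℝ) : HasDerivAt E (I • (star (U₁ s) * (H₁ s - H₂ s) * U₂ s)) s :=
    (hasDerivAt_star_mul_of_schrodinger (hH₁ s) (hU₁ s) (hU₂ s)).sub_const 1
  have hE_deriv (s : ℝ) : ‖deriv E s‖ = ‖H₁ s - H₂ s‖ := by
    have hU₁s := mem_unitary_of_schrodinger hH₁ hU₁0 hU₁ s
    have hU₂s := mem_unitary_of_schrodinger hH₂ hU₂0 hU₂ s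
    rw [(hE s).deriv, norm_smul, norm_I, one_mul, CStarRing.norm_mul_mem_unitary _ hU₂s,
      CStarRing.norm_mem_unitary_mul _ (Unitary.star_mem hU₁s)]
  have hE0 : E 0 = 0 := by simp [E, hU₁0, hU₂0]
  calc ‖E t‖ = ‖E t - E 0‖ := by rw [hE0, sub_zero]
    _ ≤ ∫ s in 0..t, ‖H₁ s - H₂ s‖ :=
      norm_sub_le_integral_of_norm_deriv_le_of_le ht (HasDerivAt.continuousOn fun s _ ↦ hE s)
        (fun s _ ↦ (hE s).differentiableAt.differentiableWithinAt)
        (.of_forall fun s _ ↦ (hE_deriv s).le) ((hH₁c.sub hH₂c).norm.intervalIntegrable 0 t)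

end

/-- For two Schrödinger evolutions `U_j' = -i·H_j·U_j`, `U_j(0) = 1`, with
Hermitian continuous generators, the error operator `E(t) = U₁(t)† U₂(t) - 1` satisfies
`‖E(t)‖ ≤ ∫₀^t ‖H₁(s) - H₂(s)‖ ds` in operator norm, and likewise `‖U₁(t) - U₂(t)‖`. -/
theorem evolution_error_bound (n : ℕ)
    (H₁ H₂ : ℝ → Matrix (Fin n) (Fin n) ℂ)
    (hH₁c : Continuous H₁) (hH₂c : Continuous H₂)
    (hH₁ : ∀ s : ℝ, (H₁ s).IsHermitian) (hH₂ : ∀ s : ℝ, (H₂ s).IsHermitian)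
    (U₁ U₂ : ℝ → Matrix (Fin n) (Fin n) ℂ)
    (hU₁0 : U₁ 0 = 1) (hU₂0 : U₂ 0 = 1)
    (hU₁ : ∀ t : ℝ, HasDerivAt U₁ ((-Complex.I) • (H₁ t * U₁ t)) t)
    (hU₂ : ∀ t : ℝ, HasDerivAt U₂ ((-Complex.I) • (H₂ t * U₂ t)) t) :
    ∀ t : ℝ, 0 ≤ t →
      ‖(U₁ t)ᴴ * U₂ t - 1‖ ≤ (∫ s in (0:ℝ)..t, ‖H₁ s - H₂ s‖) ∧
      ‖U₁ t - U₂ t‖ ≤ (∫ s in (0:ℝ)..t, ‖H₁ s - H₂ s‖) := by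
  intro t ht
  have hbound : ‖(U₁ t)ᴴ * U₂ t - 1‖ ≤ ∫ s in (0:ℝ)..t, ‖H₁ s - H₂ s‖ :=
    norm_star_mul_sub_one_le_integral hH₁c hH₂c hH₁ hH₂ hU₁0 hU₂0 hU₁ hU₂ ht
  exact ⟨hbound, (norm_sub_eq_norm_star_mul_sub_one
    (mem_unitary_of_schrodinger hH₁ hU₁0 hU₁ t) _).trans_le hbound⟩
end

section
/- Let A and B be n×n complex matrices and let U : ℝ → Matrix (Fin n) (Fin n) ℂ be a differentiable solution of U'(t) = −i·(exp(i t A) · B · exp(−i t A)) · U(t) with U(0) = 1. Then for every t ∈ ℝ, exp(−i t (A + B)) = exp(−i t A) · U(t). -/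
/-! `V(t) := e^{-itA} U(t)` satisfies `V' = -i(A+B) V` with `V(0) = 1`, because conjugating the
interaction-picture Hamiltonian back by `e^{-itA}` returns `B`. A solution of the linear equation
`V' = M V` is pinned down by its initial value, since `e^{-tM} V(t)` has zero derivative. -/

open NormedSpace

open scoped Matrix.Norms.L2Operator

lemma exp_mul_exp_neg {𝔸 : Type*} [NormedRing 𝔸] [NormedAlgebra ℚ 𝔸] [CompleteSpace 𝔸] (x : 𝔸) :
    exp x * exp (-x) = 1 := by
  rw [← exp_add_of_commute (Commute.refl x).neg_right, add_neg_cancel, exp_zero]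

section ComplexBanachAlgebra

variable {𝔸 : Type*} [NormedRing 𝔸] [NormedAlgebra ℂ 𝔸]

lemma exp_ofReal_mul_smul_eq (c : ℂ) (M : 𝔸) :
    (fun s : ℝ => exp ((c * s) • M)) = fun s : ℝ => exp ((s : ℂ) • c • M) := by
  funext s
  rw [smul_smul, mul_comm]

variable [CompleteSpace 𝔸]

lemma hasDerivAt_exp_ofReal_mul_smul (c : ℂ) (M : 𝔸) (t : ℝ) :
    HasDerivAt (fun s : ℝ => exp ((c * s) • M)) (exp ((c * t) • M) * (c • M)) t := by
  rw [exp_ofReal_mul_smul_eq]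
  refine ((hasDerivAt_exp_smul_const (c • M) (t : ℂ)).scomp t
    Complex.ofRealCLM.hasDerivAt).congr_deriv ?_
  rw [Complex.ofRealCLM_apply, Complex.ofReal_one, one_smul, smul_smul, mul_comm]

lemma hasDerivAt_exp_ofReal_mul_smul' (c : ℂ) (M : 𝔸) (t : ℝ) :
    HasDerivAt (fun s : ℝ => exp ((c * s) • M)) ((c • M) * exp ((c * t) • M)) t := by
  rw [exp_ofReal_mul_smul_eq]
  refine ((hasDerivAt_exp_smul_const' (c • M) (t : ℂ)).scomp t
    Complex.ofRealCLM.hasDerivAt).congr_deriv ?_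
  rw [Complex.ofRealCLM_apply, Complex.ofReal_one, one_smul, smul_smul, mul_comm]

theorem eq_exp_ofReal_mul_smul_mul_of_hasDerivAt (c : ℂ) (M : 𝔸) {V : ℝ → 𝔸}
    (hV : ∀ t : ℝ, HasDerivAt V ((c • M) * V t) t) (t : ℝ) :
    V t = exp ((c * t) • M) * V 0 := by
  let : NormedAlgebra ℚ 𝔸 := .restrictScalars ℚ ℂ 𝔸
  have hW : ∀ s : ℝ, HasDerivAt (fun s : ℝ => exp ((-c * s) • M) * V s) 0 s := fun s => by
    refine ((hasDerivAt_exp_ofReal_mul_smul (-c) M s).mul (hV s)).congr_deriv ?_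
    simp only [neg_smul, mul_neg, neg_mul, ← mul_assoc, neg_add_cancel]
  have hconst := is_const_of_deriv_eq_zero (fun s => (hW s).differentiableAt)
    (fun s => (hW s).deriv) t 0
  simp only [Complex.ofReal_zero, mul_zero, zero_smul, exp_zero, one_mul, neg_mul, neg_smul]
    at hconst
  rw [← hconst, ← mul_assoc, exp_mul_exp_neg, one_mul]

theorem hasDerivAt_exp_ofReal_mul_smul_mul_of_hasDerivAt (c : ℂ) (A B : 𝔸) {U : ℝ → 𝔸} {t : ℝ}
    (hU : HasDerivAt U (c • (exp ((-c * t) • A) * B * exp ((c * t) • A) * U t)) t) :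
    HasDerivAt (fun s : ℝ => exp ((c * s) • A) * U s)
      ((c • (A + B)) * (exp ((c * t) • A) * U t)) t := by
  let : NormedAlgebra ℚ 𝔸 := .restrictScalars ℚ ℂ 𝔸
  refine ((hasDerivAt_exp_ofReal_mul_smul' c A t).mul hU).congr_deriv ?_
  simp only [mul_smul_comm, neg_mul, neg_smul, ← mul_assoc, exp_mul_exp_neg, one_mul, smul_add,
    add_mul, smul_mul_assoc]

end ComplexBanachAlgebra

/-- The interaction-picture evolution: if `U` solves
`U'(t) = -i·(e^{itA} B e^{-itA})·U(t)`, `U(0) = 1`, then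
`e^{-it(A+B)} = e^{-itA} · U(t)` for all `t`. -/
theorem interaction_picture (n : ℕ) (A B : Matrix (Fin n) (Fin n) ℂ)
    (U : ℝ → Matrix (Fin n) (Fin n) ℂ) (hU0 : U 0 = 1)
    (hU : ∀ t : ℝ, HasDerivAt U
      ((-Complex.I) • (NormedSpace.exp ((Complex.I * (t : ℂ)) • A) * B *
        NormedSpace.exp ((-Complex.I * (t : ℂ)) • A) * U t)) t) :
    ∀ t : ℝ, NormedSpace.exp ((-Complex.I * (t : ℂ)) • (A + B)) =
      NormedSpace.exp ((-Complex.I * (t : ℂ)) • A) * U t := by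
  intro t
  have hV := fun s : ℝ => hasDerivAt_exp_ofReal_mul_smul_mul_of_hasDerivAt (-Complex.I) A B
    (by simpa only [neg_neg] using hU s)
  have h := eq_exp_ofReal_mul_smul_mul_of_hasDerivAt (-Complex.I) (A + B) hV t
  simp only [Complex.ofReal_zero, mul_zero, zero_smul, exp_zero, hU0, mul_one] at h
  exact h.symm
end

section
/- Fix a positive integer S, reals P > 0, c > 0, X > 0, an index μ ∈ {0,…,S−1}, and set m := μP/S + P/(2S). Let h(t) := (X/(√(2π)·c))·exp(−(t−m)²/(2c²)) and h_ext(t) := Σ_{l∈ℤ} h(t+lP). Then ∫₀^P |h_ext(t) − 1_{[μP/S,(μ+1)P/S]}(t)·h(t)| dt = X·(1 − erf(P/(2√2·S·c))), where erf(x) := (2/√π)·∫₀^x e^{−u²} du and 1_{[a,b]} denotes the indicator function of the interval [a,b]. -/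
/-!
All translates `h (· + l * P)` are nonnegative, so the integrand is `hext - 1_I h` without the
absolute value. Integrating the periodization over one period recovers `∫ h = X`, and the
truncated pulse is the Gaussian on the symmetric interval `m ± P / (2S)` around its mean, whose
mass is `X * erf (P / (2√2 S c))`.
-/

noncomputable def erf (x : ℝ) : ℝ := (2 / Real.sqrt Real.pi) * ∫ u in (0:ℝ)..x, Real.exp (-u ^ 2)

open MeasureTheory Set Real ProbabilityTheory
open scoped NNReal

section Periodization

variable {E : Type*} [NormedAddCommGroup E] [NormedSpace ℝ E] {f : ℝ → E} {P : ℝ}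

lemma hasSum_setIntegral_Ioc_add_mul (hf : Integrable f) (hP : 0 < P) :
    HasSum (fun l : ℤ => ∫ t in Ioc 0 P, f (t + l * P)) (∫ t, f t) := by
  have H := hasSum_integral_iUnion (fun _ => measurableSet_Ioc) (pairwise_disjoint_Ioc_zsmul P)
    (hf.integrableOn (s := ⋃ l : ℤ, Ioc (l • P) ((l + 1) • P)))
  rw [iUnion_Ioc_zsmul hP, setIntegral_univ] at H
  convert H using 2 with l
  rw [← intervalIntegral.integral_of_le hP.le, intervalIntegral.integral_comp_add_right,
    intervalIntegral.integral_of_le (by linarith)]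
  simp only [zsmul_eq_mul, Int.cast_add, Int.cast_one]
  ring_nf

/- `g` is charged to the term `l = 0`, so the series can be integrated termwise without first
proving that the periodization is integrable. -/
lemma setIntegral_Ioc_tsum_add_mul_sub (hf : Integrable f) (hP : 0 < P)
    (hsum : ∀ t, Summable fun l : ℤ => f (t + l * P)) {g : ℝ → E}
    (hg : IntegrableOn g (Ioc 0 P)) :
    ∫ t in Ioc 0 P, (∑' l : ℤ, f (t + l * P) - g t) = (∫ t, f t) - ∫ t in Ioc 0 P, g t := by
  set G : ℤ → ℝ → E := fun l t => f (t + l * P) - if l = 0 then g t else 0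
  have hg_ite (l : ℤ) : IntegrableOn (fun t => if l = 0 then g t else 0) (Ioc 0 P) := by
    split_ifs
    exacts [hg, integrableOn_zero]
  have hG_int (l : ℤ) : IntegrableOn (G l) (Ioc 0 P) :=
    (hf.comp_add_right _).integrableOn.sub (hg_ite l)
  have hG_norm : Summable fun l => ∫ t in Ioc 0 P, ‖G l t‖ := by
    refine (hasSum_setIntegral_Ioc_add_mul hf.norm hP).summable.congr_cofinite ?_
    filter_upwards [Filter.eventually_cofinite_ne 0] with l hl
    simp [G, hl]
  have hG_tsum (t : ℝ) : ∑' l, G l t = ∑' l : ℤ, f (t + l * P) - g t := by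
    rw [(hsum t).tsum_sub (hasSum_ite_eq 0 (g t)).summable, tsum_ite_eq]
  have hG_integral (l : ℤ) : ∫ t in Ioc 0 P, G l t =
      (∫ t in Ioc 0 P, f (t + l * P)) - if l = 0 then ∫ t in Ioc 0 P, g t else 0 := by
    rw [integral_sub (hf.comp_add_right _).integrableOn (hg_ite l)]
    split_ifs <;> simp
  have hf_sum := hasSum_setIntegral_Ioc_add_mul hf hP
  simp_rw [← hG_tsum, ← integral_tsum_of_summable_integral_norm hG_int hG_norm, hG_integral,
    hf_sum.summable.tsum_sub (hasSum_ite_eq 0 _).summable, hf_sum.tsum_eq, tsum_ite_eq]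

lemma indicator_le_tsum_add_mul {f : ℝ → ℝ} (hf : 0 ≤ f)
    (hsum : ∀ t, Summable fun l : ℤ => f (t + l * P)) (s : Set ℝ) (t : ℝ) :
    s.indicator f t ≤ ∑' l : ℤ, f (t + l * P) :=
  (indicator_le_self' (fun t _ => hf t) t).trans <| by
    simpa using (hsum t).le_tsum 0 fun l _ => hf _

end Periodization

lemma Icc_natCast_mul_div_subset_Icc {μ S : ℕ} (hμ : μ < S) {P : ℝ} (hP : 0 ≤ P) :
    Icc ((μ : ℝ) * P / S) (((μ : ℝ) + 1) * P / S) ⊆ Icc 0 P := by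
  have hS : (0 : ℝ) < S := Nat.cast_pos.2 (Nat.zero_lt_of_lt hμ)
  refine Icc_subset_Icc (by positivity) ((div_le_iff₀ hS).2 ?_)
  have : (μ : ℝ) + 1 ≤ S := by exact_mod_cast hμ
  nlinarith

lemma sqrt_pi_mul_erf (d : ℝ) : √π * erf d = ∫ u in -d..d, exp (-u ^ 2) := by
  have hcont : Continuous fun u : ℝ => exp (-u ^ 2) := by fun_prop
  have hsymm : ∫ u in -d..0, exp (-u ^ 2) = ∫ u in 0..d, exp (-u ^ 2) := by
    have := intervalIntegral.integral_comp_neg (a := 0) (b := d) fun u => exp (-u ^ 2)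
    simp only [neg_sq, neg_zero] at this
    exact this.symm
  rw [← intervalIntegral.integral_add_adjacent_intervals (b := 0) (hcont.intervalIntegrable _ _)
    (hcont.intervalIntegrable _ _), hsymm, erf]
  field_simp
  ring

lemma integral_gaussianPDFReal_sub_add (m r : ℝ) {v : ℝ≥0} (hv : v ≠ 0) :
    ∫ t in (m - r)..(m + r), gaussianPDFReal m v t = erf (r / √(2 * v)) := by
  have hs : √(2 * (v : ℝ)) ≠ 0 := by positivity
  have hpdf (t : ℝ) : gaussianPDFReal m v t
      = (√(2 * π * v))⁻¹ * exp (-(t / √(2 * v) - m / √(2 * v)) ^ 2) := by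
    rw [gaussianPDFReal, ← sub_div, div_pow, sq_sqrt (by positivity), neg_div]
  simp_rw [hpdf, intervalIntegral.integral_const_mul,
    intervalIntegral.integral_comp_div_sub (fun u => exp (-u ^ 2)) hs, ← sub_div,
    sub_sub_cancel_left, add_sub_cancel_left, neg_div, ← sqrt_pi_mul_erf, smul_eq_mul]
  rw [show (2 * π * v : ℝ) = 2 * v * π by ring, sqrt_mul (by positivity)]
  field_simp

lemma gaussianPDFReal_eq_of_coe_eq_sq (m : ℝ) {v : ℝ≥0} {c : ℝ} (hc : 0 ≤ c)
    (hv : (v : ℝ) = c ^ 2) (t : ℝ) :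
    gaussianPDFReal m v t = (√(2 * π) * c)⁻¹ * exp (-(t - m) ^ 2 / (2 * c ^ 2)) := by
  rw [gaussianPDFReal, hv, sqrt_mul (by positivity : (0 : ℝ) ≤ 2 * π), sqrt_sq hc]

lemma summable_gaussianPDFReal_add_mul (m : ℝ) (v : ℝ≥0) (t : ℝ) {P : ℝ} (hP : P ≠ 0) :
    Summable fun l : ℤ => gaussianPDFReal m v (t + l * P) := by
  rcases eq_or_ne v 0 with rfl | hv
  · simp [gaussianPDFReal]
  have hT : 0 < P ^ 2 / (2 * π * v) := by positivity
  refine ((HurwitzKernelBounds.summable_f_int 0 ((t - m) / P) hT).mul_left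
    (√(2 * π * v))⁻¹).congr fun l => ?_
  simp only [HurwitzKernelBounds.f_int, pow_zero, one_mul, gaussianPDFReal]
  congr 2
  field_simp
  ring

theorem single_pulse_area_error_general (S : ℕ) (P c X : ℝ)
    (hP : 0 < P) (hc : 0 < c) (hX : 0 < X) (μ : ℕ) (hμ : μ < S)
    (m : ℝ) (hm : m = (μ : ℝ) * P / S + P / (2 * S))
    (h : ℝ → ℝ)
    (hh : ∀ t, h t = (X / (Real.sqrt (2 * Real.pi) * c)) * Real.exp (-(t - m) ^ 2 / (2 * c ^ 2)))
    (hext : ℝ → ℝ) (hhext : ∀ t, hext t = ∑' l : ℤ, h (t + (l : ℝ) * P)) :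
    (∫ t in (0:ℝ)..P,
      |hext t - Set.indicator (Set.Icc ((μ : ℝ) * P / S) (((μ : ℝ) + 1) * P / S)) h t|)
      = X * (1 - erf (P / (2 * Real.sqrt 2 * S * c))) := by
  set v := (c ^ 2).toNNReal
  have hv_coe : (v : ℝ) = c ^ 2 := Real.coe_toNNReal _ (sq_nonneg c)
  have hv : v ≠ 0 := by rw [ne_eq, ← NNReal.coe_eq_zero, hv_coe]; positivity
  have hh_pdf : h = fun t => X * gaussianPDFReal m v t := by
    ext t
    rw [hh, gaussianPDFReal_eq_of_coe_eq_sq m hc.le hv_coe, div_eq_mul_inv, mul_assoc]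
  have hh_int : Integrable h := hh_pdf ▸ (integrable_gaussianPDFReal m v).const_mul X
  have hh_nonneg : 0 ≤ h := fun t => by
    rw [hh_pdf]
    exact mul_nonneg hX.le (gaussianPDFReal_nonneg _ _ _)
  have hsum (t : ℝ) : Summable fun l : ℤ => h (t + l * P) := by
    simp_rw [hh_pdf]
    exact (summable_gaussianPDFReal_add_mul m v t hP.ne').mul_left X
  set I := Icc ((μ : ℝ) * P / S) (((μ : ℝ) + 1) * P / S)
  have hI : Icc ((μ : ℝ) * P / S) (((μ : ℝ) + 1) * P / S)
      = Icc (m - P / (2 * S)) (m + P / (2 * S)) := by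
    congr 1 <;> (rw [hm]; field_simp; ring)
  have hr : 0 ≤ P / (2 * S) := by positivity
  calc (∫ t in (0 : ℝ)..P, |hext t - I.indicator h t|)
      = ∫ t in Ioc 0 P, (∑' l : ℤ, h (t + l * P) - I.indicator h t) := by
        rw [intervalIntegral.integral_of_le hP.le]
        congr with t
        rw [hhext, abs_of_nonneg (sub_nonneg.2 (indicator_le_tsum_add_mul hh_nonneg hsum I t))]
    _ = (∫ t, h t) - ∫ t in Icc 0 P, I.indicator h t := by
        rw [setIntegral_Ioc_tsum_add_mul_sub hh_int hP hsum
          (hh_int.indicator measurableSet_Icc).integrableOn, integral_Icc_eq_integral_Ioc]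
    _ = X - X * erf (P / (2 * S) / √(2 * c ^ 2)) := by
        rw [setIntegral_indicator measurableSet_Icc,
          inter_eq_right.2 (Icc_natCast_mul_div_subset_Icc hμ hP.le), hI,
          integral_Icc_eq_integral_Ioc, ← intervalIntegral.integral_of_le (by linarith), hh_pdf,
          intervalIntegral.integral_const_mul, integral_gaussianPDFReal_sub_add _ _ hv,
          integral_const_mul, integral_gaussianPDFReal_eq_one m hv, mul_one, hv_coe]
    _ = X * (1 - erf (P / (2 * √2 * S * c))) := by
        rw [sqrt_mul zero_le_two, sqrt_sq hc.le]
        ring_nf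

/-- The `L¹` distance on `[0,P]` between the `P`-periodized Gaussian pulse
`h_ext` and its indicator-truncated counterpart `1_{[μP/S,(μ+1)P/S]}·h` equals
`X·(1 - erf(P/(2√2·S·c)))`. -/
theorem single_pulse_area_error (S : ℕ) (hS : 0 < S) (P c X : ℝ)
    (hP : 0 < P) (hc : 0 < c) (hX : 0 < X) (μ : ℕ) (hμ : μ < S)
    (m : ℝ) (hm : m = (μ : ℝ) * P / S + P / (2 * S))
    (h : ℝ → ℝ)
    (hh : ∀ t, h t = (X / (Real.sqrt (2 * Real.pi) * c)) * Real.exp (-(t - m) ^ 2 / (2 * c ^ 2)))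
    (hext : ℝ → ℝ) (hhext : ∀ t, hext t = ∑' l : ℤ, h (t + (l : ℝ) * P)) :
    (∫ t in (0:ℝ)..P,
      |hext t - Set.indicator (Set.Icc ((μ : ℝ) * P / S) (((μ : ℝ) + 1) * P / S)) h t|)
      = X * (1 - erf (P / (2 * Real.sqrt 2 * S * c))) :=
  single_pulse_area_error_general S P c X hP hc hX μ hμ m hm h hh hext hhext
end

section
/- Fix a positive integer S and reals P > 0, c > 0. For each μ ∈ {0,…,S−1} let θ_μ > 0, set m_μ := μP/S + P/(2S), X_μ := θ_μ/(2·erf(P/(2√2·S·c))), h_μ(t) := (X_μ/(√(2π)·c))·exp(−(t−m_μ)²/(2c²)), and h_μ^ext(t) := Σ_{l∈ℤ} h_μ(t+lP). Then ∫₀^P |Σ_{μ=0}^{S−1} h_μ^ext(t) − Σ_{μ=0}^{S−1} 1_{[μP/S,(μ+1)P/S]}(t)·h_μ(t)| dt ≤ (max_μ θ_μ)·(S/2)·(1/erf(P/(2√2·S·c)) − 1), where erf(x) := (2/√π)·∫₀^x e^{−u²} du. -/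
open MeasureTheory Set
open scoped ENNReal

section Periodization

variable {P : ℝ}

theorem lintegral_Ioc_tsum_comp_add_int_mul {f : ℝ → ℝ≥0∞} (hf : Measurable f) (hP : 0 < P) :
    ∫⁻ t in Ioc 0 P, ∑' l : ℤ, f (t + l * P) = ∫⁻ t, f t := by
  have hshift (l : ℤ) :
      ∫⁻ t in Ioc 0 P, f (t + l * P) = ∫⁻ t in Ioc (l • P) ((l + 1) • P), f t := by
    rw [← (measurePreserving_add_right volume (l * P)).setLIntegral_comp_preimage
      measurableSet_Ioc hf, preimage_add_const_Ioc]
    congr 3 <;> push_cast [zsmul_eq_mul] <;> ring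
  rw [lintegral_tsum (f := fun (l : ℤ) t => f (t + l * P))
      fun _ => (hf.comp (measurable_add_const _)).aemeasurable, tsum_congr hshift,
    ← lintegral_iUnion (fun _ => measurableSet_Ioc) (pairwise_disjoint_Ioc_zsmul P),
    iUnion_Ioc_zsmul hP, Measure.restrict_univ]

variable {f : ℝ → ℝ}

theorem lintegral_Ioc_ofReal_tsum_comp_add_int_mul (hfm : Measurable f) (hf0 : 0 ≤ f)
    (hsum : ∀ t, Summable fun l : ℤ => f (t + l * P)) (hP : 0 < P) :
    ∫⁻ t in Ioc 0 P, ENNReal.ofReal (∑' l : ℤ, f (t + l * P)) = ∫⁻ t, ENNReal.ofReal (f t) := by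
  simp_rw [ENNReal.ofReal_tsum_of_nonneg (fun _ => hf0 _) (hsum _)]
  exact lintegral_Ioc_tsum_comp_add_int_mul hfm.ennreal_ofReal hP

theorem integrableOn_tsum_comp_add_int_mul (hfm : Measurable f) (hf0 : 0 ≤ f)
    (hfi : Integrable f) (hsum : ∀ t, Summable fun l : ℤ => f (t + l * P)) (hP : 0 < P) :
    IntegrableOn (fun t => ∑' l : ℤ, f (t + l * P)) (Icc 0 P) := by
  rw [integrableOn_Icc_iff_integrableOn_Ioc]
  refine ⟨(Measurable.tsum fun _ => hfm.comp (measurable_add_const _)).aestronglyMeasurable, ?_⟩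
  rw [hasFiniteIntegral_iff_ofReal (ae_of_all _ fun _ => tsum_nonneg fun _ => hf0 _),
    lintegral_Ioc_ofReal_tsum_comp_add_int_mul hfm hf0 hsum hP]
  exact hfi.lintegral_lt_top

theorem integral_Icc_tsum_comp_add_int_mul (hfm : Measurable f) (hf0 : 0 ≤ f)
    (hsum : ∀ t, Summable fun l : ℤ => f (t + l * P)) (hP : 0 < P) :
    ∫ t in Icc 0 P, ∑' l : ℤ, f (t + l * P) = ∫ t, f t := by
  rw [integral_Icc_eq_integral_Ioc,
    integral_eq_lintegral_of_nonneg_ae (ae_of_all _ fun _ => tsum_nonneg fun _ => hf0 _)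
      (Measurable.tsum fun _ => hfm.comp (measurable_add_const _)).aestronglyMeasurable,
    integral_eq_lintegral_of_nonneg_ae (ae_of_all _ hf0) hfm.aestronglyMeasurable,
    lintegral_Ioc_ofReal_tsum_comp_add_int_mul hfm hf0 hsum hP]

theorem indicator_le_tsum_comp_add_int_mul (hf0 : 0 ≤ f)
    (hsum : ∀ t, Summable fun l : ℤ => f (t + l * P)) (s : Set ℝ) (t : ℝ) :
    s.indicator f t ≤ ∑' l : ℤ, f (t + l * P) :=
  calc s.indicator f t ≤ f t := indicator_le_self' (fun x _ => hf0 x) t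
    _ = f (t + (0 : ℤ) * P) := by simp
    _ ≤ ∑' l : ℤ, f (t + l * P) := (hsum t).le_tsum 0 fun _ _ => hf0 _

theorem integral_abs_sum_tsum_sub_sum_indicator {ι : Type*} (s : Finset ι)
    {f : ι → ℝ → ℝ} (hfm : ∀ i, Measurable (f i)) (hf0 : ∀ i, 0 ≤ f i)
    (hfi : ∀ i, Integrable (f i)) (hsum : ∀ i t, Summable fun l : ℤ => f i (t + l * P))
    (hP : 0 < P) {I : ι → Set ℝ} (hI : ∀ i, MeasurableSet (I i)) (hIP : ∀ i, I i ⊆ Icc 0 P) :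
    ∫ t in 0..P, |∑ i ∈ s, ∑' l : ℤ, f i (t + l * P) - ∑ i ∈ s, (I i).indicator (f i) t|
      = ∑ i ∈ s, ((∫ t, f i t) - ∫ t in I i, f i t) := by
  have hle (t : ℝ) : ∑ i ∈ s, (I i).indicator (f i) t ≤ ∑ i ∈ s, ∑' l : ℤ, f i (t + l * P) :=
    Finset.sum_le_sum fun i _ => indicator_le_tsum_comp_add_int_mul (hf0 i) (hsum i) _ t
  have hint (i : ι) : IntegrableOn
      (fun t => ∑' l : ℤ, f i (t + l * P) - (I i).indicator (f i) t) (Icc 0 P) :=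
    (integrableOn_tsum_comp_add_int_mul (hfm i) (hf0 i) (hfi i) (hsum i) hP).sub
      ((hfi i).indicator (hI i)).integrableOn
  rw [intervalIntegral.integral_of_le hP.le, ← integral_Icc_eq_integral_Ioc]
  calc _ = ∫ t in Icc 0 P, ∑ i ∈ s, (∑' l : ℤ, f i (t + l * P) - (I i).indicator (f i) t) := by
        congr with t
        rw [abs_of_nonneg (sub_nonneg.2 (hle t)), Finset.sum_sub_distrib]
    _ = ∑ i ∈ s, ∫ t in Icc 0 P, (∑' l : ℤ, f i (t + l * P) - (I i).indicator (f i) t) :=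
        integral_finsetSum s fun i _ => hint i
    _ = _ := Finset.sum_congr rfl fun i _ => by
        rw [integral_sub (integrableOn_tsum_comp_add_int_mul (hfm i) (hf0 i) (hfi i) (hsum i) hP)
            ((hfi i).indicator (hI i)).integrableOn,
          integral_Icc_tsum_comp_add_int_mul (hfm i) (hf0 i) (hsum i) hP,
          setIntegral_indicator (hI i), inter_eq_right.2 (hIP i)]

end Periodization

open ProbabilityTheory Real
open scoped NNReal

theorem intervalIntegral_exp_neg_sq_neg_self (y : ℝ) :
    ∫ u in (-y)..y, exp (-u ^ 2) = √π * erf y := by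
  have hint (a b : ℝ) : IntervalIntegrable (fun u => exp (-u ^ 2)) volume a b :=
    (by fun_prop : Continuous fun u : ℝ => exp (-u ^ 2)).intervalIntegrable a b
  have heven : ∫ u in (-y)..0, exp (-u ^ 2) = ∫ u in (0 : ℝ)..y, exp (-u ^ 2) := by
    have h := intervalIntegral.integral_comp_neg (a := -y) (b := 0) fun u => exp (-u ^ 2)
    simp only [neg_neg, neg_zero] at h
    simpa only [even_two, Even.neg_pow] using h
  rw [← intervalIntegral.integral_add_adjacent_intervals (hint _ 0) (hint 0 _), heven, erf]
  field_simp
  ring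

theorem integral_Icc_sub_add_gaussianPDFReal (m : ℝ) {v : ℝ≥0} (hv : v ≠ 0) {a : ℝ} (ha : 0 ≤ a) :
    ∫ t in Icc (m - a) (m + a), gaussianPDFReal m v t = erf (a / √(2 * v)) := by
  have hs : 0 < √(2 * (v : ℝ)) := by positivity
  have hexp (x : ℝ) : exp (-x ^ 2 / (2 * v)) = exp (-(x * (√(2 * v))⁻¹) ^ 2) := by
    rw [mul_pow, inv_pow, sq_sqrt (by positivity)]
    ring_nf
  rw [integral_Icc_eq_integral_Ioc, ← intervalIntegral.integral_of_le (by linarith),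
    gaussianPDFReal_def, intervalIntegral.integral_const_mul,
    intervalIntegral.integral_comp_sub_right (fun x => exp (-x ^ 2 / (2 * v)))]
  simp_rw [hexp]
  rw [intervalIntegral.integral_comp_mul_right (fun u => exp (-u ^ 2)) (inv_ne_zero hs.ne'),
    sub_sub_cancel_left, add_sub_cancel_left, neg_mul, intervalIntegral_exp_neg_sq_neg_self,
    inv_inv, smul_eq_mul, ← div_eq_mul_inv, show 2 * π * v = 2 * v * π by ring,
    sqrt_mul (by positivity)]
  field_simp

theorem erf_pos {x : ℝ} (hx : 0 < x) : 0 < erf x :=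
  mul_pos (by positivity) (intervalIntegral.intervalIntegral_pos_of_pos
    (Continuous.intervalIntegrable (by fun_prop) _ _) (fun _ => exp_pos _) hx)

theorem erf_le_one {x : ℝ} (hx : 0 ≤ x) : erf x ≤ 1 := by
  have hv : (2⁻¹ : ℝ≥0) ≠ 0 := by norm_num
  calc erf x = ∫ t in Icc (0 - x) (0 + x), gaussianPDFReal 0 2⁻¹ t := by
        rw [integral_Icc_sub_add_gaussianPDFReal 0 hv hx]
        norm_num
    _ ≤ ∫ t, gaussianPDFReal 0 2⁻¹ t := setIntegral_le_integral (integrable_gaussianPDFReal _ _)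
        (ae_of_all _ (gaussianPDFReal_nonneg _ _))
    _ = 1 := integral_gaussianPDFReal_eq_one 0 hv

theorem summable_gaussianPDFReal_comp_add_int_mul (m : ℝ) {v : ℝ≥0} (hv : v ≠ 0) {P : ℝ}
    (hP : P ≠ 0) (t : ℝ) : Summable fun l : ℤ => gaussianPDFReal m v (t + l * P) := by
  have hτ : 0 < P ^ 2 / (2 * v * π) := by positivity
  refine ((HurwitzKernelBounds.summable_f_int 0 ((t - m) / P) hτ).mul_left
    (√(2 * π * v))⁻¹).congr fun l => ?_
  rw [HurwitzKernelBounds.f_int, pow_zero, one_mul, gaussianPDFReal]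
  congr 2
  field_simp
  ring

theorem gaussianPDFReal_toNNReal_sq (m : ℝ) {c : ℝ} (hc : 0 < c) (t : ℝ) :
    gaussianPDFReal m (c ^ 2).toNNReal t = (√(2 * π) * c)⁻¹ * exp (-(t - m) ^ 2 / (2 * c ^ 2)) := by
  rw [gaussianPDFReal, Real.coe_toNNReal _ (sq_nonneg c), sqrt_mul (by positivity), sqrt_sq hc.le]

theorem integral_abs_sum_periodized_sub_truncated_gaussianPDFReal {ι : Type*} (s : Finset ι)
    {K m : ι → ℝ} (hK : ∀ i, 0 ≤ K i) {v : ℝ≥0} (hv : v ≠ 0) {P a : ℝ} (hP : 0 < P)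
    (ha : 0 ≤ a) (hIP : ∀ i, Icc (m i - a) (m i + a) ⊆ Icc 0 P) :
    ∫ t in 0..P, |∑ i ∈ s, ∑' l : ℤ, K i * gaussianPDFReal (m i) v (t + l * P) -
        ∑ i ∈ s, (Icc (m i - a) (m i + a)).indicator (fun t => K i * gaussianPDFReal (m i) v t) t|
      = ∑ i ∈ s, K i * (1 - erf (a / √(2 * v))) := by
  rw [integral_abs_sum_tsum_sub_sum_indicator s (f := fun i t => K i * gaussianPDFReal (m i) v t)
    (fun _ => (measurable_gaussianPDFReal _ _).const_mul _)
    (fun i t => mul_nonneg (hK i) (gaussianPDFReal_nonneg _ _ t))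
    (fun _ => (integrable_gaussianPDFReal _ _).const_mul _)
    (fun _ t => (summable_gaussianPDFReal_comp_add_int_mul _ hv hP.ne' t).mul_left _)
    hP (fun _ => measurableSet_Icc) hIP]
  refine Finset.sum_congr rfl fun i _ => ?_
  rw [integral_const_mul, integral_const_mul, integral_gaussianPDFReal_eq_one _ hv,
    integral_Icc_sub_add_gaussianPDFReal _ hv ha]
  ring

/-- **Lemma 2 of the paper.** The `L¹` distance on `[0,P]` between the sum of the
`P`-periodized Gaussian pulses and the sum of their indicator-truncated counterparts is bounded
by `(max_μ θ_μ)·(S/2)·(1/erf(P/(2√2·S·c)) − 1)`. -/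
theorem area_error_bound (S : ℕ) (hS : 0 < S) (P c : ℝ) (hP : 0 < P) (hc : 0 < c)
    (θ : Fin S → ℝ) (hθ : ∀ μ, 0 < θ μ)
    (m X : Fin S → ℝ) (h : Fin S → ℝ → ℝ) (hext : Fin S → ℝ → ℝ)
    (hm : ∀ μ : Fin S, m μ = (μ : ℝ) * P / S + P / (2 * S))
    (hX : ∀ μ : Fin S, X μ = θ μ / (2 * erf (P / (2 * Real.sqrt 2 * S * c))))
    (hh : ∀ (μ : Fin S) (t : ℝ), h μ t =
      (X μ / (Real.sqrt (2 * Real.pi) * c)) * Real.exp (-(t - m μ) ^ 2 / (2 * c ^ 2)))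
    (hhext : ∀ (μ : Fin S) (t : ℝ), hext μ t = ∑' l : ℤ, h μ (t + (l : ℝ) * P)) :
    (∫ t in (0:ℝ)..P,
      |(∑ μ : Fin S, hext μ t) -
        ∑ μ : Fin S,
          Set.indicator (Set.Icc ((μ : ℝ) * P / S) (((μ : ℝ) + 1) * P / S)) (h μ) t|)
      ≤ (Finset.univ.sup' ⟨⟨0, hS⟩, Finset.mem_univ _⟩ θ) * (S / 2) *
          (1 / erf (P / (2 * Real.sqrt 2 * S * c)) - 1) := by
  set E := erf (P / (2 * √2 * S * c))
  set Θ := Finset.univ.sup' ⟨⟨0, hS⟩, Finset.mem_univ _⟩ θ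
  set v := (c ^ 2).toNNReal
  have hv : v ≠ 0 := by simpa [v] using hc.ne'
  have hE : 0 < E := erf_pos (by positivity)
  have hE1 : 0 ≤ 1 - E := sub_nonneg.2 (erf_le_one (by positivity))
  have hgauss (μ : Fin S) : h μ = fun t => X μ * gaussianPDFReal (m μ) v t := by
    ext t
    rw [hh, gaussianPDFReal_toNNReal_sq _ hc, div_eq_mul_inv, mul_assoc]
  have hIcc (μ : Fin S) : Icc ((μ : ℝ) * P / S) ((μ + 1) * P / S)
      = Icc (m μ - P / (2 * S)) (m μ + P / (2 * S)) := by
    rw [hm]; congr 1 <;> field_simp <;> ring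
  have hIP (μ : Fin S) : Icc (m μ - P / (2 * S)) (m μ + P / (2 * S)) ⊆ Icc 0 P := by
    have : (μ : ℝ) + 1 ≤ S := by exact_mod_cast μ.isLt
    rw [← hIcc]
    exact Icc_subset_Icc (by positivity) (div_le_of_le_mul₀ (by positivity) hP.le (by nlinarith))
  have hwidth : erf (P / (2 * S) / √(2 * v)) = E := by
    rw [Real.coe_toNNReal _ (sq_nonneg c), sqrt_mul zero_le_two, sqrt_sq hc.le]
    congr 1
    field_simp
  simp only [hhext, hgauss, hIcc]
  rw [integral_abs_sum_periodized_sub_truncated_gaussianPDFReal Finset.univ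
    (fun μ => hX μ ▸ div_nonneg (hθ μ).le (by positivity)) hv hP (by positivity) hIP, hwidth]
  calc ∑ μ, X μ * (1 - E) ≤ ∑ _μ : Fin S, Θ / (2 * E) * (1 - E) :=
        Finset.sum_le_sum fun μ _ => by
          rw [hX]
          gcongr
          exact Finset.le_sup' θ (Finset.mem_univ μ)
    _ = Θ * (S / 2) * (1 / E - 1) := by
        rw [Finset.sum_const, Finset.card_univ, Fintype.card_fin, nsmul_eq_mul]
        field_simp
end

section
/- Let P > 0 and let f : ℂ → ℂ be entire (differentiable on all of ℂ) with f(z + P) = f(z) for all z ∈ ℂ. Then for every n ∈ ℤ and every a ∈ ℝ, ∫₀^P f(x)·exp(−2πi·n·x/P) dx = ∫₀^P f(x − i·a)·exp(−2πi·n·(x − i·a)/P) dx, where the integrals are over the real variable x ∈ [0,P]. -/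
/-- Contour shift for Fourier coefficients of a periodic entire function:
the integral over `[0,P]` on the real axis equals the integral along the horizontal line
`Im z = -a`. -/
theorem contour_shift (P : ℝ) (hP : 0 < P) (f : ℂ → ℂ) (hf : Differentiable ℂ f)
    (hper : ∀ z : ℂ, f (z + (P : ℂ)) = f z) (n : ℤ) (a : ℝ) :
    (∫ x in (0:ℝ)..P, f (x : ℂ) *
        Complex.exp (-2 * Real.pi * Complex.I * (n : ℂ) * (x : ℂ) / (P : ℂ)))
      = ∫ x in (0:ℝ)..P, f ((x : ℂ) - Complex.I * (a : ℂ)) *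
          Complex.exp (-2 * Real.pi * Complex.I * (n : ℂ) *
            ((x : ℂ) - Complex.I * (a : ℂ)) / (P : ℂ)) := by
  have hP0 : (P : ℂ) ≠ 0 := by exact_mod_cast hP.ne'
  set g : ℂ → ℂ := fun z => f z * Complex.exp (-2 * Real.pi * Complex.I * (n : ℂ) * z / (P : ℂ))
    with hg
  have hgd : Differentiable ℂ g :=
    hf.mul (Complex.differentiable_exp.comp
      (((differentiable_const _).mul differentiable_id).div_const _))
  have hgper : ∀ y : ℝ, g ((P : ℂ) + y * Complex.I) = g ((0 : ℂ) + y * Complex.I) := by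
    intro y
    simp only [hg]
    have h1 : f ((P:ℂ) + y * Complex.I) = f ((0:ℂ) + y * Complex.I) := by
      rw [zero_add, ← hper (y * Complex.I)]; ring_nf
    rw [h1]
    congr 1
    have h2 : -2 * (Real.pi:ℂ) * Complex.I * n * ((P:ℂ) + y * Complex.I) / P
        = -2 * (Real.pi:ℂ) * Complex.I * n * ((0:ℂ) + y * Complex.I) / P
          + ((-n : ℤ) : ℂ) * (2 * Real.pi * Complex.I) := by
      push_cast; field_simp; ring
    rw [h2, Complex.exp_add, Complex.exp_int_mul_two_pi_mul_I, mul_one]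
  have key : (∫ x : ℝ in (0:ℝ)..P, g (x + (-a : ℝ) * Complex.I))
      - (∫ x : ℝ in (0:ℝ)..P, g (x + (0 : ℝ) * Complex.I))
      + Complex.I • (∫ y : ℝ in (-a)..(0:ℝ), g ((P:ℝ) + y * Complex.I))
      - Complex.I • (∫ y : ℝ in (-a)..(0:ℝ), g ((0:ℝ) + y * Complex.I)) = 0 :=
    Complex.integral_boundary_rect_eq_zero_of_differentiableOn g ⟨0, -a⟩ ⟨P, 0⟩
      hgd.differentiableOn
  have hvert : (∫ y : ℝ in (-a)..(0:ℝ), g ((P:ℝ) + y * Complex.I))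
      = ∫ y : ℝ in (-a)..(0:ℝ), g ((0:ℝ) + y * Complex.I) := by
    refine intervalIntegral.integral_congr fun y _ => ?_
    simpa using hgper y
  rw [hvert] at key
  have main : (∫ x : ℝ in (0:ℝ)..P, g (x + (-a : ℝ) * Complex.I))
      = ∫ x : ℝ in (0:ℝ)..P, g (x + (0 : ℝ) * Complex.I) := by
    linear_combination (norm := module) key
  have L : (∫ x : ℝ in (0:ℝ)..P, g (x + (0 : ℝ) * Complex.I))
      = ∫ x in (0:ℝ)..P, f (x : ℂ) *
        Complex.exp (-2 * Real.pi * Complex.I * (n : ℂ) * (x : ℂ) / (P : ℂ)) := by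
    refine intervalIntegral.integral_congr fun x _ => ?_
    simp [hg]
  have R : (∫ x : ℝ in (0:ℝ)..P, g (x + (-a : ℝ) * Complex.I))
      = ∫ x in (0:ℝ)..P, f ((x : ℂ) - Complex.I * (a : ℂ)) *
          Complex.exp (-2 * Real.pi * Complex.I * (n : ℂ) *
            ((x : ℂ) - Complex.I * (a : ℂ)) / (P : ℂ)) := by
    refine intervalIntegral.integral_congr fun x _ => ?_
    have hz : (x:ℂ) + (-a : ℝ) * Complex.I = (x:ℂ) - Complex.I * (a:ℂ) := by
      push_cast; ring
    rw [hz]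
  rw [← L, ← R, main]
end

section
/- Fix reals X > 0, c > 0, P > 0, m ∈ ℝ, a > 0, and n ∈ ℤ with n ≥ 1. Let F(z) := Σ_{l∈ℤ} (X/(√(2π)·c))·exp(−(z + l·P − m)²/(2c²)) for z ∈ ℂ. Then |∫₀^P F(x − i·a)·exp(−2πi·n·(x − i·a)/P) dx| ≤ X·exp(a²/(2c²))·exp(−2π·n·a/P). -/
/-!
Along the line `Im z = -a`, expanding `(x - ia + lP - m)²` shows that each term of the
periodized pulse times `e^{-2πinz/P}` has modulus `e^{a²/(2c²)} e^{-2πna/P}` times the real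
Gaussian pulse at `x + lP - m`. Integrating over `[0, P]` and summing over `l`, the translated
segments `[lP - m, (l+1)P - m]` tile `ℝ`, so the sum of the integrals of the moduli is the total
mass `X` of the pulse.
-/

open MeasureTheory Set

noncomputable def gaussianPulse (X c t : ℝ) : ℝ :=
  X / (√(2 * Real.pi) * c) * Real.exp (-t ^ 2 / (2 * c ^ 2))

theorem integral_exp_neg_sq_div_two_mul_sq (c : ℝ) :
    ∫ x, Real.exp (-x ^ 2 / (2 * c ^ 2)) = √(2 * Real.pi) * |c| := by
  have h := integral_gaussian (1 / (2 * c ^ 2))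
  simp only [neg_mul, one_div_mul_eq_div, neg_div] at h ⊢
  rw [h, div_div_eq_mul_div, div_one, show Real.pi * (2 * c ^ 2) = 2 * Real.pi * c ^ 2 by ring,
    Real.sqrt_mul (by positivity), Real.sqrt_sq_eq_abs]

theorem integrable_exp_neg_sq_div_two_mul_sq {c : ℝ} (hc : c ≠ 0) :
    Integrable fun x => Real.exp (-x ^ 2 / (2 * c ^ 2)) := by
  have h := integrable_exp_neg_mul_sq (b := 1 / (2 * c ^ 2)) (by positivity)
  simp only [neg_mul, one_div_mul_eq_div, neg_div] at h ⊢
  exact h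

theorem integrable_gaussianPulse (X : ℝ) {c : ℝ} (hc : c ≠ 0) :
    Integrable (gaussianPulse X c) :=
  (integrable_exp_neg_sq_div_two_mul_sq hc).const_mul _

theorem integral_gaussianPulse (X : ℝ) {c : ℝ} (hc : 0 < c) :
    ∫ t, gaussianPulse X c t = X := by
  simp only [gaussianPulse]
  rw [integral_const_mul, integral_exp_neg_sq_div_two_mul_sq, abs_of_pos hc]
  field_simp

theorem Complex.norm_exp_neg_sub_mul_I_sq_div (u a c : ℝ) :
    ‖exp (-((u : ℂ) - I * a) ^ 2 / (2 * (c : ℂ) ^ 2))‖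
      = Real.exp (a ^ 2 / (2 * c ^ 2)) * Real.exp (-u ^ 2 / (2 * c ^ 2)) := by
  rw [norm_exp, ← Real.exp_add]
  congr 1
  rw [show (2 * (c : ℂ) ^ 2) = ((2 * c ^ 2 : ℝ) : ℂ) by push_cast; ring, div_ofReal_re]
  simp only [sq, neg_re, mul_re, sub_re, ofReal_re, I_re, zero_mul, I_im, ofReal_im, mul_zero,
    sub_self, sub_zero, sub_im, mul_im, one_mul, zero_add, zero_sub, mul_neg, neg_mul, neg_neg,
    neg_sub]
  ring

theorem Complex.norm_exp_neg_two_pi_I_mul_sub_mul_I_div (n x a P : ℝ) :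
    ‖exp (-2 * Real.pi * I * n * ((x : ℂ) - I * a) / P)‖
      = Real.exp (-2 * Real.pi * n * a / P) := by
  simp [norm_exp]

theorem norm_integral_tsum_le_of_hasSum_integral_norm {α ι E : Type*} [MeasurableSpace α]
    {μ : Measure α} [NormedAddCommGroup E] [NormedSpace ℝ E] [Countable ι] {F : ι → α → E}
    {S : ℝ} (hF_int : ∀ i, Integrable (F i) μ) (hS : HasSum (fun i => ∫ a, ‖F i a‖ ∂μ) S) :
    ‖∫ a, ∑' i, F i a ∂μ‖ ≤ S := by
  rw [← integral_tsum_of_summable_integral_norm hF_int hS.summable]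
  have hsum : Summable fun i => ‖∫ a, F i a ∂μ‖ :=
    hS.summable.of_nonneg_of_le (fun _ => norm_nonneg _)
      fun _ => norm_integral_le_integral_norm _
  calc ‖∑' i, ∫ a, F i a ∂μ‖ ≤ ∑' i, ‖∫ a, F i a ∂μ‖ := norm_tsum_le_tsum_norm hsum
    _ ≤ S := hS.tsum_eq ▸
      hsum.tsum_le_tsum (fun _ => norm_integral_le_integral_norm _) hS.summable

theorem hasSum_intervalIntegral_comp_add_int_mul {E : Type*} [NormedAddCommGroup E]
    [NormedSpace ℝ E] {φ : ℝ → E} (hφ : Integrable φ) {P : ℝ} (hP : 0 < P) (b : ℝ) :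
    HasSum (fun l : ℤ => ∫ x in (0 : ℝ)..P, φ (x + l * P + b)) (∫ x, φ x) := by
  have htiles := hasSum_integral_iUnion (μ := volume)
    (s := fun l : ℤ => Ioc (b + l • P) (b + (l + 1) • P)) (fun _ => measurableSet_Ioc)
    (pairwise_disjoint_Ioc_add_zsmul b P)
    (by rw [iUnion_Ioc_add_zsmul hP]; exact hφ.integrableOn)
  rw [iUnion_Ioc_add_zsmul hP, setIntegral_univ] at htiles
  convert htiles using 2 with l
  simp_rw [add_assoc, intervalIntegral.integral_comp_add_right]
  rw [intervalIntegral.integral_of_le (by linarith)]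
  congr 3 <;> (push_cast [zsmul_eq_mul]; ring)

theorem horizontal_line_estimate_general (X c P m a : ℝ) (hX : 0 < X) (hc : 0 < c) (hP : 0 < P)
    (n : ℤ)
    (F : ℂ → ℂ)
    (hF : ∀ z : ℂ, F z = ∑' l : ℤ,
      ((X / (Real.sqrt (2 * Real.pi) * c) : ℝ) : ℂ) *
        Complex.exp (-(z + (l : ℂ) * (P : ℂ) - (m : ℂ)) ^ 2 / (2 * (c : ℂ) ^ 2))) :
    ‖∫ x in (0:ℝ)..P, F ((x : ℂ) - Complex.I * (a : ℂ)) *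
        Complex.exp (-2 * Real.pi * Complex.I * (n : ℂ) *
          ((x : ℂ) - Complex.I * (a : ℂ)) / (P : ℂ))‖
      ≤ X * Real.exp (a ^ 2 / (2 * c ^ 2)) * Real.exp (-2 * Real.pi * (n : ℝ) * a / P) := by
  set T : ℤ → ℝ → ℂ := fun l x => ((X / (√(2 * Real.pi) * c) : ℝ) : ℂ) *
    Complex.exp (-((x : ℂ) - Complex.I * a + l * P - m) ^ 2 / (2 * (c : ℂ) ^ 2)) *
      Complex.exp (-2 * Real.pi * Complex.I * (n : ℂ) * ((x : ℂ) - Complex.I * a) / P)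
  have hT : ∀ x : ℝ, F ((x : ℂ) - Complex.I * a) *
      Complex.exp (-2 * Real.pi * Complex.I * (n : ℂ) * ((x : ℂ) - Complex.I * a) / P)
        = ∑' l, T l x := fun x => by rw [hF, ← tsum_mul_right]
  have hnorm : ∀ l x, ‖T l x‖ = gaussianPulse X c (x + l * P + -m) *
      (Real.exp (a ^ 2 / (2 * c ^ 2)) * Real.exp (-2 * Real.pi * n * a / P)) := fun l x => by
    have hshift : (x : ℂ) - Complex.I * a + l * P - m
        = ((x + l * P + -m : ℝ) : ℂ) - Complex.I * a := by
      push_cast; ring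
    have hosc := Complex.norm_exp_neg_two_pi_I_mul_sub_mul_I_div n x a P
    push_cast at hosc
    rw [norm_mul, norm_mul, hshift, Complex.norm_exp_neg_sub_mul_I_sq_div, hosc,
      Complex.norm_real, Real.norm_of_nonneg (by positivity), gaussianPulse]
    ring
  have hmass : HasSum (fun l => ∫ x in (0 : ℝ)..P, ‖T l x‖)
      (X * Real.exp (a ^ 2 / (2 * c ^ 2)) * Real.exp (-2 * Real.pi * n * a / P)) := by
    simp_rw [hnorm, intervalIntegral.integral_mul_const]
    have hpulse :=
      hasSum_intervalIntegral_comp_add_int_mul (integrable_gaussianPulse X hc.ne') hP (-m)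
    rw [integral_gaussianPulse X hc] at hpulse
    simpa only [mul_assoc] using hpulse.mul_right _
  rw [intervalIntegral.integral_of_le hP.le]
  simp_rw [hT]
  refine norm_integral_tsum_le_of_hasSum_integral_norm (fun _ => ?_) ?_
  · exact Continuous.integrableOn_Ioc (by fun_prop)
  · simpa only [intervalIntegral.integral_of_le hP.le] using hmass

/-- Horizontal-line estimate for the complex extension of the `P`-periodized
Gaussian pulse: the integral along `Im z = -a` of `F(z)·e^{-2πinz/P}` has modulus at most
`X·e^{a²/(2c²)}·e^{-2πna/P}`. -/
theorem horizontal_line_estimate (X c P m a : ℝ) (hX : 0 < X) (hc : 0 < c) (hP : 0 < P)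
    (ha : 0 < a) (n : ℤ) (hn : 1 ≤ n)
    (F : ℂ → ℂ)
    (hF : ∀ z : ℂ, F z = ∑' l : ℤ,
      ((X / (Real.sqrt (2 * Real.pi) * c) : ℝ) : ℂ) *
        Complex.exp (-(z + (l : ℂ) * (P : ℂ) - (m : ℂ)) ^ 2 / (2 * (c : ℂ) ^ 2))) :
    ‖∫ x in (0:ℝ)..P, F ((x : ℂ) - Complex.I * (a : ℂ)) *
        Complex.exp (-2 * Real.pi * Complex.I * (n : ℂ) *
          ((x : ℂ) - Complex.I * (a : ℂ)) / (P : ℂ))‖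
      ≤ X * Real.exp (a ^ 2 / (2 * c ^ 2)) * Real.exp (-2 * Real.pi * (n : ℝ) * a / P) :=
  horizontal_line_estimate_general X c P m a hX hc hP n F hF
end

section
/- Fix reals X > 0, c > 0, P > 0, m ∈ ℝ, and let h_ext(t) := Σ_{l∈ℤ} (X/(√(2π)·c))·exp(−(t + l·P − m)²/(2c²)), with Fourier coefficients h^(n) := (1/P)·∫₀^P h_ext(t)·exp(−2πi·n·t/P) dt and M-th Fourier partial sum h^[M](t) := Σ_{n=−M}^{M} h^(n)·exp(2πi·n·t/P). Then for every natural number M, every real a > 0, and every t ∈ ℝ: |h_ext(t) − h^[M](t)| ≤ exp(a²/(2c²))·(X/(π·a))·exp(−2π·M·a/P). -/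
/-!
By Poisson summation (Jacobi's transformation formula for theta series) the periodized Gaussian
is the sum of its Fourier series, with coefficients `(X/P) e^{-2π²c²n²/P²} e^{-2πinm/P}`; since
that series converges absolutely, integrating it term by term shows these are the `h^(n)`.
Completing the square, `2π²c²n²/P² ≥ 2πa|n|/P - a²/(2c²)`, so `|h^(n)| ≤ (X/P) e^{a²/(2c²)} q^|n|`
with `q = e^{-2πa/P}`. The truncation error is at most the tail `2 q^{M+1}/(1 - q)` of this
geometric series, and `q/(1 - q) = 1/(e^{2πa/P} - 1) ≤ P/(2πa)`.
-/

open Real MeasureTheory AddCircle Finset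

section FourierSeries

variable {T : ℝ}

theorem norm_fourier_apply (n : ℤ) (x : AddCircle T) : ‖fourier n x‖ = 1 :=
  Circle.norm_coe _

variable [Fact (0 < T)]

theorem fourierCoeff_tsum_smul_fourier {C : ℤ → ℂ} (hC : Summable fun k ↦ ‖C k‖) (n : ℤ) :
    fourierCoeff (fun x : AddCircle T ↦ ∑' k, C k • fourier k x) n = C n := by
  have hnorm (k : ℤ) (x : AddCircle T) : ‖fourier (-n) x • C k • fourier k x‖ = ‖C k‖ := by
    rw [norm_smul, norm_smul, norm_fourier_apply, norm_fourier_apply, one_mul, mul_one]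
  have hint (k : ℤ) :
      Integrable (fun x : AddCircle T ↦ fourier (-n) x • C k • fourier k x) haarAddCircle :=
    Continuous.integrable_of_hasCompactSupport (by fun_prop) (.of_compactSpace _)
  calc fourierCoeff (fun x : AddCircle T ↦ ∑' k, C k • fourier k x) n
      = ∑' k, ∫ x, fourier (-n) x • C k • fourier k x ∂haarAddCircle := by
        rw [fourierCoeff, integral_tsum_of_summable_integral_norm hint]
        · simp_rw [← tsum_const_smul'']
        · simp_rw [hnorm, integral_const, probReal_univ, one_smul]
          exact hC
    _ = ∑' k, C k • fourierCoeff (fourier k) n := by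
        congr! 2 with k
        rw [fourierCoeff.eq_1 (T := T), ← integral_smul]
        simp_rw [smul_comm (C k)]
    _ = C n := by
        simp_rw [fourierCoeff_fourier, Pi.single_apply, smul_eq_mul, mul_ite, mul_one, mul_zero,
          eq_comm (a := n)]
        exact tsum_ite_eq n C

theorem intervalIntegral_tsum_fourier_mul_exp {C : ℤ → ℂ} (hC : Summable fun k ↦ ‖C k‖)
    (n : ℤ) :
    1 / (T : ℂ) * ∫ t in (0 : ℝ)..T, (∑' k, C k • fourier k (t : AddCircle T)) *
      Complex.exp (-2 * π * Complex.I * n * t / T) = C n := by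
  rw [← fourierCoeff_tsum_smul_fourier (T := T) hC n, fourierCoeff_eq_intervalIntegral _ n 0,
    zero_add, Complex.real_smul, Complex.ofReal_div, Complex.ofReal_one]
  refine congrArg _ (intervalIntegral.integral_congr fun t _ ↦ ?_)
  rw [fourier_coe_apply, smul_eq_mul, mul_comm]
  push_cast
  ring_nf

end FourierSeries

theorem neg_mul_sq_le_sq_div_sub_mul {β : ℝ} (hβ : 0 < β) (b x : ℝ) :
    -β * x ^ 2 ≤ b ^ 2 / (4 * β) - b * x := by
  have hsq : b ^ 2 / (4 * β) - b * x - -β * x ^ 2 = (2 * β * x - b) ^ 2 / (4 * β) := by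
    field_simp
    ring
  rw [← sub_nonneg, hsq]
  positivity

theorem exp_neg_mul_sq_le {β : ℝ} (hβ : 0 < β) (b : ℝ) (n : ℤ) :
    rexp (-β * n ^ 2) ≤ rexp (b ^ 2 / (4 * β)) * rexp (-b) ^ n.natAbs := by
  rw [← exp_nat_mul, ← exp_add, exp_le_exp, Nat.cast_natAbs, Int.cast_abs, ← sq_abs (n : ℝ)]
  linarith [neg_mul_sq_le_sq_div_sub_mul hβ b |(n : ℝ)|]

theorem exp_neg_pow_succ_div_one_sub_le {x : ℝ} (hx : 0 < x) (M : ℕ) :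
    rexp (-x) ^ (M + 1) / (1 - rexp (-x)) ≤ rexp (-(M * x)) / x := by
  have hex : x < rexp x - 1 := by linarith [add_one_lt_exp hx.ne']
  have hratio : rexp (-x) / (1 - rexp (-x)) = 1 / (rexp x - 1) := by
    rw [exp_neg]
    field_simp
  calc rexp (-x) ^ (M + 1) / (1 - rexp (-x))
      = rexp (-(M * x)) * (rexp (-x) / (1 - rexp (-x))) := by
        rw [pow_succ, ← exp_nat_mul, mul_neg, mul_div_assoc]
    _ ≤ rexp (-(M * x)) * (1 / x) := by
        rw [hratio]
        gcongr
    _ = rexp (-(M * x)) / x := by ring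

section GeometricTail

variable {q : ℝ} (hq0 : 0 ≤ q) (hq1 : q < 1)
include hq0 hq1

theorem summable_pow_natAbs : Summable fun n : ℤ ↦ q ^ n.natAbs :=
  .of_nat_of_neg (by simpa using summable_geometric_of_lt_one hq0 hq1)
    (by simpa using summable_geometric_of_lt_one hq0 hq1)

theorem hasSum_ite_lt_pow (K : ℕ) :
    HasSum (fun k : ℕ ↦ if k < K then 0 else q ^ k) (q ^ K / (1 - q)) := by
  rw [← hasSum_nat_add_iff' K, sum_eq_zero fun k hk ↦ if_pos (mem_range.mp hk), sub_zero]
  simpa [pow_add, mul_comm, div_eq_mul_inv] using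
    (hasSum_geometric_of_lt_one hq0 hq1).mul_left (q ^ K)

theorem hasSum_pow_natAbs_of_notMem_Icc (M : ℕ) :
    HasSum (fun n : ℤ ↦ if n ∈ Icc (-(M : ℤ)) M then 0 else q ^ n.natAbs)
      (2 * (q ^ (M + 1) / (1 - q))) := by
  have hpos := hasSum_ite_lt_pow hq0 hq1 (M + 1)
  have hneg := (hasSum_ite_lt_pow hq0 hq1 M).mul_left q
  rw [two_mul]
  refine HasSum.of_nat_of_neg_add_one (hpos.congr_fun fun k ↦ ?_) ?_
  · simp only [mem_Icc, Int.natAbs_natCast]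
    split_ifs <;> first | rfl | omega
  · rw [pow_succ', mul_div_assoc]
    refine hneg.congr_fun fun k ↦ ?_
    simp only [mem_Icc, mul_ite, mul_zero, ← pow_succ']
    split_ifs <;> first | rfl | omega

theorem norm_tsum_sub_sum_Icc_le {E : Type*} [NormedAddCommGroup E] [CompleteSpace E]
    {f : ℤ → E} {C : ℝ} (hf : ∀ n, ‖f n‖ ≤ C * q ^ n.natAbs) (M : ℕ) :
    ‖∑' n, f n - ∑ n ∈ Icc (-(M : ℤ)) M, f n‖ ≤ C * (2 * (q ^ (M + 1) / (1 - q))) := by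
  have hsum : Summable f := .of_norm_bounded ((summable_pow_natAbs hq0 hq1).mul_left C) hf
  have hfin : HasSum (fun n ↦ if n ∈ Icc (-(M : ℤ)) M then f n else 0)
      (∑ n ∈ Icc (-(M : ℤ)) M, f n) := by
    have := hasSum_sum_of_ne_finset_zero (L := .unconditional ℤ) (s := Icc (-(M : ℤ)) M)
      (f := fun n ↦ if n ∈ Icc (-(M : ℤ)) M then f n else 0) fun n hn ↦ if_neg hn
    rwa [sum_ite_mem, inter_self] at this
  have htail : HasSum (fun n ↦ if n ∈ Icc (-(M : ℤ)) M then 0 else f n)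
      (∑' n, f n - ∑ n ∈ Icc (-(M : ℤ)) M, f n) :=
    (hsum.hasSum.sub hfin).congr_fun fun n ↦ by split_ifs <;> simp
  rw [← htail.tsum_eq]
  refine tsum_of_norm_bounded ((hasSum_pow_natAbs_of_notMem_Icc hq0 hq1 M).mul_left C) fun n ↦ ?_
  split_ifs
  · simp
  · exact hf n

end GeometricTail

section PeriodizedGaussian

open Complex

/-- `(1/P)·ĥ(n/P)` for the pulse `h`: its Fourier transform sampled at the frequencies of
period `P`, the phase `fourier (-n) m` coming from the shift by `m`. -/
noncomputable def gaussianFourierCoeff (X c P m : ℝ) [Fact (0 < P)] (n : ℤ) : ℂ :=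
  ((X / P * rexp (-(2 * π ^ 2 * c ^ 2 / P ^ 2) * n ^ 2) : ℝ) : ℂ) * fourier (-n) (m : AddCircle P)

variable {P : ℝ} [hP : Fact (0 < P)]

theorem norm_gaussianFourierCoeff_le {X c : ℝ} (hX : 0 ≤ X) (hc : 0 < c) (m a : ℝ) (n : ℤ) :
    ‖gaussianFourierCoeff X c P m n‖ ≤
      X / P * rexp (a ^ 2 / (2 * c ^ 2)) * rexp (-(2 * π * a / P)) ^ n.natAbs := by
  have hP0 := hP.out
  have hβ : 0 < 2 * π ^ 2 * c ^ 2 / P ^ 2 := by positivity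
  have hexp : a ^ 2 / (2 * c ^ 2) = (2 * π * a / P) ^ 2 / (4 * (2 * π ^ 2 * c ^ 2 / P ^ 2)) := by
    field_simp
    ring
  rw [gaussianFourierCoeff, norm_mul, norm_fourier_apply, mul_one, norm_real,
    Real.norm_of_nonneg (by positivity), mul_assoc (X / P), hexp]
  exact mul_le_mul_of_nonneg_left (exp_neg_mul_sq_le hβ _ n) (by positivity)

theorem ofReal_tsum_gaussian_eq_tsum_fourier {X c m : ℝ} (hc : 0 < c) (t : ℝ) :
    ((∑' l : ℤ, X / (√(2 * π) * c) * rexp (-(t + l * P - m) ^ 2 / (2 * c ^ 2)) : ℝ) : ℂ) =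
      ∑' n : ℤ, gaussianFourierCoeff X c P m n • fourier n (t : AddCircle P) := by
  have hP0 : (P : ℂ) ≠ 0 := ofReal_ne_zero.mpr hP.out.ne'
  -- Jacobi's transformation formula with `a = A` and `b = I (t - m) / P`: its dual side is the
  -- periodization of the pulse, read backwards (`l = -n`).
  set A : ℝ := 2 * π * c ^ 2 / P ^ 2 with hA
  have hA0 : 0 < A := by have := hP.out; positivity
  have hsqrtA : (A : ℂ) ^ (1 / 2 : ℂ) = ((√(2 * π) * c / P : ℝ) : ℂ) := by
    rw [← ofReal_ofNat, ← ofReal_one, ← ofReal_div, ← ofReal_cpow hA0.le, ← sqrt_eq_rpow, hA,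
      sqrt_div' _ (sq_nonneg P), sqrt_sq hP.out.le, sqrt_mul' _ (sq_nonneg c), sqrt_sq hc.le]
  have hdual (n : ℤ) : cexp (-π / A * (n + I * (I * (t - m) / P)) ^ 2) =
      rexp (-(t + ((-n : ℤ) : ℝ) * P - m) ^ 2 / (2 * c ^ 2)) := by
    rw [ofReal_exp, ← mul_div_assoc, ← mul_assoc, I_mul_I, hA]
    congr 1
    push_cast
    field_simp
    ring
  have hterm (n : ℤ) : (X / P : ℂ) * cexp (-π * A * n ^ 2 + 2 * π * (I * (t - m) / P) * n) =
      gaussianFourierCoeff X c P m n • fourier n (t : AddCircle P) := by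
    simp only [gaussianFourierCoeff, fourier_coe_apply, smul_eq_mul, ofReal_mul, ofReal_exp,
      ofReal_div, mul_assoc, ← Complex.exp_add]
    congr 2
    rw [hA]
    push_cast
    field_simp
    ring
  calc ((∑' l : ℤ, X / (√(2 * π) * c) * rexp (-(t + l * P - m) ^ 2 / (2 * c ^ 2)) : ℝ) : ℂ)
      = (X / (√(2 * π) * c) : ℂ) * ∑' n : ℤ, cexp (-π / A * (n + I * (I * (t - m) / P)) ^ 2) := by
        rw [ofReal_tsum, ← tsum_mul_left, ← (Equiv.neg ℤ).tsum_eq]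
        refine tsum_congr fun n ↦ ?_
        rw [hdual, Equiv.neg_apply]
        push_cast
        ring
    _ = (X / P : ℂ) * ∑' n : ℤ, cexp (-π * A * n ^ 2 + 2 * π * (I * (t - m) / P) * n) := by
        rw [tsum_exp_neg_quadratic (by simpa using hA0), hsqrtA, ← mul_assoc]
        congr 1
        push_cast
        field_simp
    _ = ∑' n : ℤ, gaussianFourierCoeff X c P m n • fourier n (t : AddCircle P) := by
        rw [← tsum_mul_left]
        exact tsum_congr hterm

end PeriodizedGaussian

/-- **Lemma 3 of the paper.** The Fourier partial sums of the `P`-periodized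
Gaussian pulse converge to it exponentially fast in the truncation order `M`:
`|h_ext(t) − h^[M](t)| ≤ e^{a²/(2c²)}·(X/(πa))·e^{-2πMa/P}` for every `a > 0`. -/
theorem fourier_truncation_error (X c P m : ℝ) (hX : 0 < X) (hc : 0 < c) (hP : 0 < P)
    (hext : ℝ → ℝ)
    (hhext : ∀ t : ℝ, hext t = ∑' l : ℤ,
      (X / (Real.sqrt (2 * Real.pi) * c)) * Real.exp (-(t + (l : ℝ) * P - m) ^ 2 / (2 * c ^ 2)))
    (coef : ℤ → ℂ)
    (hcoef : ∀ n : ℤ, coef n = (1 / (P : ℂ)) *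
      ∫ t in (0:ℝ)..P, (hext t : ℂ) *
        Complex.exp (-2 * Real.pi * Complex.I * (n : ℂ) * (t : ℂ) / (P : ℂ))) :
    ∀ (M : ℕ) (a : ℝ), 0 < a → ∀ t : ℝ,
      ‖(hext t : ℂ) - ∑ n ∈ Finset.Icc (-(M : ℤ)) (M : ℤ), coef n *
          Complex.exp (2 * Real.pi * Complex.I * (n : ℂ) * (t : ℂ) / (P : ℂ))‖
        ≤ Real.exp (a ^ 2 / (2 * c ^ 2)) * (X / (Real.pi * a)) *
            Real.exp (-2 * Real.pi * (M : ℝ) * a / P) := by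
  intro M a ha t
  have : Fact (0 < P) := ⟨hP⟩
  set C := gaussianFourierCoeff X c P m
  set x := 2 * π * a / P with hx_def
  have hx : 0 < x := by positivity
  have hq0 : 0 ≤ rexp (-x) := (exp_pos _).le
  have hq1 : rexp (-x) < 1 := Real.exp_lt_one_iff.mpr (neg_lt_zero.mpr hx)
  have hbound (n : ℤ) : ‖C n‖ ≤ X / P * rexp (a ^ 2 / (2 * c ^ 2)) * rexp (-x) ^ n.natAbs :=
    norm_gaussianFourierCoeff_le hX.le hc m a n
  have hC : Summable fun n ↦ ‖C n‖ :=
    .of_nonneg_of_le (fun _ ↦ norm_nonneg _) hbound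
      ((summable_pow_natAbs hq0 hq1).mul_left _)
  have hseries (t : ℝ) : (hext t : ℂ) = ∑' n, C n • fourier n (t : AddCircle P) := by
    rw [hhext]
    exact ofReal_tsum_gaussian_eq_tsum_fourier hc t
  have hcoefC (n : ℤ) : coef n = C n := by
    rw [hcoef]
    simp_rw [hseries]
    exact intervalIntegral_tsum_fourier_mul_exp hC n
  calc _ = ‖∑' n, C n • fourier n (t : AddCircle P) -
        ∑ n ∈ Icc (-(M : ℤ)) M, C n • fourier n (t : AddCircle P)‖ := by
        simp_rw [hseries, hcoefC, fourier_coe_apply, smul_eq_mul]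
    _ ≤ X / P * rexp (a ^ 2 / (2 * c ^ 2)) * (2 * (rexp (-x) ^ (M + 1) / (1 - rexp (-x)))) :=
        norm_tsum_sub_sum_Icc_le hq0 hq1
          (fun n ↦ by rw [norm_smul, norm_fourier_apply, mul_one]; exact hbound n) M
    _ ≤ X / P * rexp (a ^ 2 / (2 * c ^ 2)) * (2 * (rexp (-(M * x)) / x)) := by
        gcongr _ * (2 * ?_)
        exact exp_neg_pow_succ_div_one_sub_le hx M
    _ = _ := by
        have hexp : -(M * x) = -2 * π * M * a / P := by ring
        rw [hexp, hx_def]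
        field_simp
end

section
/- Let Y, θ, ε > 0 and S ≥ 1 be reals, set K := Y·θ·S/ε and x := √(ln(K + 1)), and define erf(x) := (2/√π)·∫₀^x e^{−t²} dt. Then for every real M with M ≥ (S/π)·(2·ln(K + 1) + ln S + ln(2/π)), one has (Y·θ·S²/π)·(1/erf(x))·exp(x²)·exp(−π·M/S) ≤ ε/2. -/
/-! Since `e^{x²} = K + 1` and `erf x ≥ 1 - e^{-x²} = K/(K+1)`, the error is at most
`(YθS²/π)·((K+1)²/K)·e^{-πM/S}`, and the bound on `M` is exactly `e^{-πM/S} ≤ π/(2S(K+1)²)`;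
with `K = YθS/ε` the product collapses to `ε/2`. -/

open Filter Set Real MeasureTheory

lemma erf_zero : erf 0 = 0 := by simp [erf]

lemma hasDerivAt_erf (t : ℝ) : HasDerivAt erf (2 / √π * exp (-t ^ 2)) t := by
  have hc : Continuous fun u : ℝ => exp (-u ^ 2) := by fun_prop
  exact ((hc.integral_hasStrictDerivAt 0 t).hasDerivAt).const_mul _

lemma tendsto_erf_atTop : Tendsto erf atTop (nhds 1) := by
  have hint : IntegrableOn (fun u : ℝ => exp (-u ^ 2)) (Ioi 0) := by
    simpa using (integrable_exp_neg_mul_sq one_pos).integrableOn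
  have hgauss : ∫ u in Ioi (0 : ℝ), exp (-u ^ 2) = √π / 2 := by
    simpa using integral_gaussian_Ioi 1
  have h := (intervalIntegral_tendsto_integral_Ioi 0 hint tendsto_id).const_mul (2 / √π)
  have hconst : 2 / √π * (√π / 2) = 1 := by field_simp
  rwa [hgauss, hconst] at h

lemma hasDerivAt_exp_neg_sq (t : ℝ) :
    HasDerivAt (fun t : ℝ => exp (-t ^ 2)) (-2 * t * exp (-t ^ 2)) t :=
  ((hasDerivAt_id t).pow 2).neg.exp.congr_deriv (by simp; ring)

/-- The difference `erf t - (1 - exp (-t²))` vanishes at `0` and at `+∞` and is unimodal on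
`[0, ∞)`, increasing up to `1/√π` and decreasing after it, so it is nonnegative there. -/
lemma one_sub_exp_neg_sq_le_erf {x : ℝ} (hx : 0 ≤ x) : 1 - exp (-x ^ 2) ≤ erf x := by
  set g : ℝ → ℝ := fun t => erf t - (1 - exp (-t ^ 2))
  have hg' (t : ℝ) : HasDerivAt g (2 * exp (-t ^ 2) * ((√π)⁻¹ - t)) t :=
    ((hasDerivAt_erf t).sub ((hasDerivAt_exp_neg_sq t).const_sub 1)).congr_deriv (by ring)
  have hg : Differentiable ℝ g := fun t => (hg' t).differentiableAt
  suffices 0 ≤ g x by simp only [g] at this; linarith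
  rcases le_total x (√π)⁻¹ with hxc | hxc
  · have hmono : MonotoneOn g (Icc 0 (√π)⁻¹) := by
      refine monotoneOn_of_deriv_nonneg (convex_Icc _ _) hg.continuous.continuousOn
        hg.differentiableOn fun t ht => ?_
      rw [interior_Icc] at ht
      rw [(hg' t).deriv]
      have hgap : 0 ≤ (√π)⁻¹ - t := sub_nonneg.2 ht.2.le
      positivity
    have hg0 : g 0 = 0 := by simp [g, erf_zero]
    exact hg0 ▸ hmono ⟨le_rfl, by positivity⟩ ⟨hx, hxc⟩ hx
  · have hanti : AntitoneOn g (Ici (√π)⁻¹) := by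
      refine antitoneOn_of_deriv_nonpos (convex_Ici _) hg.continuous.continuousOn
        hg.differentiableOn fun t ht => ?_
      rw [interior_Ici] at ht
      rw [(hg' t).deriv]
      exact mul_nonpos_of_nonneg_of_nonpos (by positivity) (sub_nonpos.2 (le_of_lt ht))
    have hlim : Tendsto g atTop (nhds 0) := by
      have h := tendsto_erf_atTop.sub ((tendsto_exp_neg_atTop_nhds_zero.comp
        (tendsto_pow_atTop two_ne_zero)).const_sub 1)
      simpa using h
    refine le_of_tendsto hlim ?_
    filter_upwards [eventually_ge_atTop x] with t ht
    exact hanti hxc (hxc.trans ht) ht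

/-- With `K = YθS/ε` and `x = √(ln(K+1))`, for every Fourier truncation order
`M ≥ (S/π)·(2·ln(K+1) + ln S + ln(2/π))` the Fourier error
`E_Fourier = (YθS²/π)·(1/erf x)·e^{x²}·e^{-πM/S}` is at most `ε/2`. -/
theorem fourier_error_small (Y θ ε S : ℝ) (hY : 0 < Y) (hθ : 0 < θ) (hε : 0 < ε)
    (hS : 1 ≤ S) (K x : ℝ) (hK : K = Y * θ * S / ε) (hx : x = Real.sqrt (Real.log (K + 1)))
    (M : ℝ) (hM : (S / Real.pi) * (2 * Real.log (K + 1) + Real.log S + Real.log (2 / Real.pi)) ≤ M) :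
    Y * θ * S ^ 2 / Real.pi * (1 / erf x) * Real.exp (x ^ 2) * Real.exp (-Real.pi * M / S)
      ≤ ε / 2 := by
  have hS0 : 0 < S := by linarith
  have hK0 : 0 < K := by rw [hK]; positivity
  have hexp : exp (x ^ 2) = K + 1 := by
    rw [hx, sq_sqrt (log_nonneg (by linarith)), exp_log (by linarith)]
  have herf : K / (K + 1) ≤ erf x := by
    have h := one_sub_exp_neg_sq_le_erf (hx ▸ sqrt_nonneg _)
    have hK1 : 1 - (K + 1)⁻¹ = K / (K + 1) := by field_simp; ring
    rwa [exp_neg, hexp, hK1] at h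
  have hlog : log (2 * S * (K + 1) ^ 2 / π) ≤ π * M / S := by
    have hsplit : 2 * S * (K + 1) ^ 2 / π = (K + 1) ^ 2 * S * (2 / π) := by ring
    rw [hsplit, log_mul (by positivity) (by positivity), log_mul (by positivity) hS0.ne', log_pow,
      le_div_iff₀ hS0]
    rw [div_mul_eq_mul_div, div_le_iff₀ pi_pos] at hM
    push_cast
    linarith
  have hdecay : exp (-π * M / S) ≤ π / (2 * S * (K + 1) ^ 2) := by
    calc exp (-π * M / S) = exp (-(π * M / S)) := by ring_nf
      _ ≤ exp (-log (2 * S * (K + 1) ^ 2 / π)) := exp_le_exp.2 (neg_le_neg hlog)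
      _ = π / (2 * S * (K + 1) ^ 2) := by rw [exp_neg, exp_log (by positivity), inv_div]
  calc _ ≤ Y * θ * S ^ 2 / π * (1 / (K / (K + 1))) * (K + 1) * (π / (2 * S * (K + 1) ^ 2)) := by
        rw [hexp]; gcongr
    _ = ε / 2 := by rw [hK]; field_simp
end
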